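/- arXiv:1907.07257 — 5 statements merged into one kernel-verified Lean document; each statement's English description precedes it below -/
import Mathlib

section
/- For any g ∈ SL₂(ℤ), the following identity holds in M̃_Γ: {g,gS} + {gU,gUS} + {gU²,gU²S} = {g,gT} + {gU,gUT} + {gU²,gU²T}, where S = [[0,-1],[1,0]], U = [[1,-1],[1,0]], T = [[1,1],[0,1]]. -/
/-!
Since `U S = -T`, `U² S = -U T` and `U² T = S`, after discarding signs the identity reads
`f a z + f b x + f c y = f a x + f b y + f c z` with `a = g`, `b = gU`, `c = gU²`. This holds for
any `f` satisfying the three-term relation and vanishing on the diagonal (which is `{g, gT⁰} = 0`):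
the two sides differ by `f a c + f b a + f c b = -(f a b + f b c + f c a) = 0`.
-/

namespace Stmt5

abbrev SL2 : Type := Matrix.SpecialLinearGroup (Fin 2) ℤ

def T : SL2 := ⟨!![1, 1; 0, 1], by norm_num [Matrix.det_fin_two_of]⟩
def S : SL2 := ⟨!![0, -1; 1, 0], by norm_num [Matrix.det_fin_two_of]⟩
def U : SL2 := ⟨!![1, -1; 1, 0], by norm_num [Matrix.det_fin_two_of]⟩
def negOne : SL2 := ⟨!![-1, 0; 0, -1], by norm_num [Matrix.det_fin_two_of]⟩

section ThreeTermRelation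

variable {α M : Type*} [AddCommGroup M] {f : α → α → M}
  (hrel : ∀ a b c, f a b + f b c + f c a = 0) (hdiag : ∀ a, f a a = 0)
include hrel hdiag

theorem apply_swap (a b : α) : f b a = -f a b := by
  have h := hrel a b b
  rw [hdiag, add_zero] at h
  exact eq_neg_of_add_eq_zero_right h

theorem apply_eq_apply_add_apply (a b c : α) : f a c = f a b + f b c := by
  rw [apply_swap hrel hdiag c a]
  linear_combination (norm := abel_nf) -hrel a b c

theorem apply_add_apply_add_apply_rotate (a b c x y z : α) :
    f a z + f b x + f c y = f a x + f b y + f c z := by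
  rw [apply_eq_apply_add_apply hrel hdiag a c z, apply_eq_apply_add_apply hrel hdiag b a x,
    apply_eq_apply_add_apply hrel hdiag c b y, apply_swap hrel hdiag c a,
    apply_swap hrel hdiag a b, apply_swap hrel hdiag b c]
  linear_combination (norm := abel_nf) -hrel a b c

end ThreeTermRelation

theorem coe_negOne : (negOne : Matrix (Fin 2) (Fin 2) ℤ) = -1 := by
  ext i j
  fin_cases i <;> fin_cases j <;> rfl

theorem negOne_commute (g : SL2) : Commute negOne g :=
  Subtype.ext <| by simp [coe_negOne]

theorem U_mul_S : U * S = negOne * T := by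
  ext i j
  fin_cases i <;> fin_cases j <;> rfl

theorem U_mul_U_mul_S : U * U * S = negOne * (U * T) := by
  ext i j
  fin_cases i <;> fin_cases j <;> rfl

theorem U_mul_U_mul_T : U * U * T = S := by
  ext i j
  fin_cases i <;> fin_cases j <;> rfl

theorem mul_U_mul_S (g : SL2) : g * U * S = negOne * (g * T) := by
  rw [mul_assoc, U_mul_S, ← mul_assoc, ← (negOne_commute g).eq, mul_assoc]

theorem mul_U_mul_U_mul_S (g : SL2) : g * U * U * S = negOne * (g * U * T) := by
  rw [mul_assoc, mul_assoc, ← mul_assoc U, U_mul_U_mul_S, ← mul_assoc,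
    ← (negOne_commute g).eq, mul_assoc, mul_assoc]

theorem mul_U_mul_U_mul_T (g : SL2) : g * U * U * T = g * S := by
  rw [mul_assoc, mul_assoc, ← mul_assoc U, U_mul_U_mul_T]

theorem stmt_5_general {M : Type*} [AddCommGroup M]
    (f : SL2 → SL2 → M)
    (hChasles : ∀ g g' g'' : SL2, f g g' + f g' g'' + f g'' g = 0)
    (hSignR : ∀ g g' : SL2, f g (negOne * g') = f g g')
    (hT : ∀ (g : SL2) (n : ℤ), f g (g * T ^ n) = n • f g (g * T))
    (g : SL2) :
    f g (g * S) + f (g * U) (g * U * S) + f (g * U * U) (g * U * U * S)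
      = f g (g * T) + f (g * U) (g * U * T) + f (g * U * U) (g * U * U * T) := by
  have hdiag : ∀ a, f a a = 0 := fun a => by simpa using hT a 0
  rw [mul_U_mul_S, mul_U_mul_U_mul_S, mul_U_mul_U_mul_T, hSignR, hSignR]
  exact apply_add_apply_add_apply_rotate hChasles hdiag _ _ _ _ _ _

/-- For any `g ∈ SL₂(ℤ)`, in `M̃_Γ` (here formulated universally for any
assignment `f : SL₂(ℤ)² → M` satisfying the defining relations of the mixed modular
symbols of level a finite index subgroup `Γ`):
`{g,gS} + {gU,gUS} + {gU²,gU²S} = {g,gT} + {gU,gUT} + {gU²,gU²T}`. -/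
theorem stmt_5 {M : Type*} [AddCommGroup M] (Γ : Subgroup SL2) (hΓ : Γ.FiniteIndex)
    (f : SL2 → SL2 → M)
    (hChasles : ∀ g g' g'' : SL2, f g g' + f g' g'' + f g'' g = 0)
    (hSignL : ∀ g g' : SL2, f (negOne * g) g' = f g g')
    (hSignR : ∀ g g' : SL2, f g (negOne * g') = f g g')
    (hT : ∀ (g : SL2) (n : ℤ), f g (g * T ^ n) = n • f g (g * T))
    (hΓinv : ∀ γ ∈ Γ, ∀ g g' : SL2, f (γ * g) (γ * g') = f g g')
    (g : SL2) :
    f g (g * S) + f (g * U) (g * U * S) + f (g * U * U) (g * U * U * S)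
      = f g (g * T) + f (g * U) (g * U * T) + f (g * U * U) (g * U * U * T) :=
  stmt_5_general f hChasles hSignR hT g

end Stmt5
end

section
/- Let p ≥ 5 be prime and n ≥ 1. Every element of (ℤ/pⁿℤ)ˣ/±1 can be connected to 1 via the following moves: for x, y ∈ (ℤ/pⁿℤ)ˣ with x+y (or x−y) a unit, the element [x]+[y]+[x±y] lies in the allowed subgroup; concretely, the subgroup of ℤ[(ℤ/pⁿℤ)ˣ/±1] generated by the elements [x]+[y]+[x+y] (for x, y, x+y all units) contains [u]−[v] for all units u, v and contains 3·[1]. Consequently this subgroup is exactly the set of elements of degree divisible by 3. -/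
namespace Stmt9

variable (p n : ℕ)

/-- The quotient `(ℤ/pⁿℤ)ˣ/±1`. -/
abbrev Q : Type := (ZMod (p ^ n))ˣ ⧸ Subgroup.zpowers (-1 : (ZMod (p ^ n))ˣ)

/-- The class of a unit in `(ℤ/pⁿℤ)ˣ/±1`. -/
abbrev cls (u : (ZMod (p ^ n))ˣ) : Q p n := QuotientGroup.mk u

/-- The subgroup of `ℤ[(ℤ/pⁿℤ)ˣ/±1]` generated by the elements `[x]+[y]+[x+y]` for
units `x, y` with `x+y` a unit. -/
def A : AddSubgroup (FreeAbelianGroup (Q p n)) :=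
  AddSubgroup.closure
    {z | ∃ u v w : (ZMod (p ^ n))ˣ, (w : ZMod (p ^ n)) = (u : ZMod (p ^ n)) + v ∧
      z = FreeAbelianGroup.of (cls p n u) + FreeAbelianGroup.of (cls p n v) +
        FreeAbelianGroup.of (cls p n w)}

/-- The degree map `ℤ[(ℤ/pⁿℤ)ˣ/±1] → ℤ`, `Σ n_x [x] ↦ Σ n_x`. -/
def deg : FreeAbelianGroup (Q p n) →+ ℤ := FreeAbelianGroup.lift (fun _ => (1 : ℤ))

/-!
Writing `[u]` for the class of a unit in `ℤ[Rˣ/±1]`: when `2` is a unit and `u ± v` are both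
units, `u = a + b` and `v = a - b` with `a = (u + v)/2`, `b = (u - v)/2`, so `[u] - [v]` is a
difference of two generators `[a] + [±b] + [a ± b]`. In a local ring in which `3` is also a unit,
any two units are linked by at most two such steps, through `2v`. Then `[1] + [1] + [2]` and
`[2] - [1]` give `3[1]`, and every `z` is `deg z • [1]` modulo the subgroup, so the subgroup is the
preimage of `3ℤ` under the degree.
-/

open FreeAbelianGroup

theorem _root_.IsLocalRing.isUnit_add_of_not_isUnit {R : Type*} [CommRing R] [IsLocalRing R]
    {x y : R} (hx : ¬IsUnit x) (hy : IsUnit y) : IsUnit (x + y) := by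
  by_contra hxy
  have := IsLocalRing.isUnit_or_isUnit_of_isUnit_add (a := x + y) (b := -x) (by simpa using hy)
  simp_all

theorem _root_.ZMod.isLocalRing_prime_pow {p n : ℕ} (hp : p.Prime) (hn : 0 < n) :
    IsLocalRing (ZMod (p ^ n)) :=
  haveI : Fact p.Prime := ⟨hp⟩
  haveI : Fact (1 < p ^ n) := ⟨Nat.one_lt_pow hn.ne' hp.one_lt⟩
  .of_surjective' (PadicInt.toZModPow n) (ZMod.ringHom_surjective _)

theorem _root_.ZMod.isUnit_natCast_prime_pow_of_lt {p n k : ℕ} (hp : p.Prime) (hn : 0 < n)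
    (hk : 0 < k) (hkp : k < p) : IsUnit (k : ZMod (p ^ n)) :=
  (ZMod.isUnit_natCast_iff_not_dvd_pow hp hn).mpr (Nat.not_dvd_of_pos_of_lt hk hkp)

theorem _root_.FreeAbelianGroup.sub_lift_one_smul_mem {X : Type*}
    {H : AddSubgroup (FreeAbelianGroup X)} (x₀ : X) (hH : ∀ x, of x - of x₀ ∈ H)
    (z : FreeAbelianGroup X) : z - lift (fun _ => (1 : ℤ)) z • of x₀ ∈ H := by
  induction z using FreeAbelianGroup.induction_on with
  | zero => simp
  | of x => simpa using hH x
  | neg x hx => convert H.neg_mem hx using 1; simp [neg_smul]; abel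
  | add x y hx hy => convert H.add_mem hx hy using 1; simp [add_smul]; abel

section UnitsModSign

variable {R : Type*} [CommRing R]

abbrev symb (u : Rˣ) : FreeAbelianGroup (Rˣ ⧸ Subgroup.zpowers (-1 : Rˣ)) :=
  of (QuotientGroup.mk u)

variable (R) in
def threeTermSubgroup : AddSubgroup (FreeAbelianGroup (Rˣ ⧸ Subgroup.zpowers (-1 : Rˣ))) :=
  AddSubgroup.closure {z | ∃ u v w : Rˣ, (w : R) = u + v ∧ z = symb u + symb v + symb w}

theorem symb_neg (u : Rˣ) : symb (-u) = symb u :=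
  congrArg of <| QuotientGroup.eq.mpr ⟨1, by simp⟩

theorem symb_add_symb_add_symb_mem {u v w : Rˣ} (h : (w : R) = u + v) :
    symb u + symb v + symb w ∈ threeTermSubgroup R :=
  AddSubgroup.subset_closure ⟨u, v, w, h, rfl⟩

theorem threeTermSubgroup_le_comap_lift_one :
    threeTermSubgroup R ≤ (AddSubgroup.zmultiples (3 : ℤ)).comap (lift fun _ => 1) := by
  refine (AddSubgroup.closure_le _).mpr ?_
  rintro _ ⟨u, v, w, -, rfl⟩
  exact ⟨1, by simp⟩

theorem symb_sub_symb_mem_of_isUnit_add_of_isUnit_sub (h2 : IsUnit (2 : R)) {u v : Rˣ}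
    (hs : IsUnit ((u : R) + v)) (hd : IsUnit ((u : R) - v)) :
    symb u - symb v ∈ threeTermSubgroup R := by
  have hhalf : 2 * ((h2.unit⁻¹ : Rˣ) : R) = 1 := h2.mul_val_inv
  have hu : (u : R) = ↑(hs.unit * h2.unit⁻¹) + ↑(hd.unit * h2.unit⁻¹) := by
    simp only [Units.val_mul, IsUnit.unit_spec]
    linear_combination (-(u : R)) * hhalf
  have hv : (v : R) = ↑(hs.unit * h2.unit⁻¹) + ↑(-(hd.unit * h2.unit⁻¹)) := by
    simp only [Units.val_neg, Units.val_mul, IsUnit.unit_spec]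
    linear_combination (-(v : R)) * hhalf
  have := sub_mem (symb_add_symb_add_symb_mem hu) (symb_add_symb_add_symb_mem hv)
  rw [symb_neg] at this
  convert this using 1
  abel

/-- If `u ± v` are not both units, one of them lies in the maximal ideal and `u ± 2v` differ from
it by `±v` or `±3v`, so `u` is linked to `v` through `w = 2v`. -/
theorem symb_sub_symb_mem [IsLocalRing R] (h2 : IsUnit (2 : R)) (h3 : IsUnit (3 : R))
    (u v : Rˣ) : symb u - symb v ∈ threeTermSubgroup R := by
  by_cases huv : IsUnit ((u : R) + v) ∧ IsUnit ((u : R) - v)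
  · exact symb_sub_symb_mem_of_isUnit_add_of_isUnit_sub h2 huv.1 huv.2
  let w : Rˣ := h2.unit * v
  have hw : (w : R) = 2 * v := by simp [w]
  have h3v : IsUnit (3 * (v : R)) := h3.mul v.isUnit
  have huw : IsUnit ((u : R) + w) ∧ IsUnit ((u : R) - w) := by
    rw [hw]
    rcases not_and_or.mp huv with hs | hd
    · exact ⟨by convert IsLocalRing.isUnit_add_of_not_isUnit hs v.isUnit using 1; ring,
        by convert IsLocalRing.isUnit_add_of_not_isUnit hs h3v.neg using 1; ring⟩
    · exact ⟨by convert IsLocalRing.isUnit_add_of_not_isUnit hd h3v using 1; ring,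
        by convert IsLocalRing.isUnit_add_of_not_isUnit hd v.isUnit.neg using 1; ring⟩
  have hwv : IsUnit ((w : R) + v) ∧ IsUnit ((w : R) - v) := by
    rw [hw]
    exact ⟨by convert h3v using 1; ring, by convert v.isUnit using 1; ring⟩
  simpa using add_mem (symb_sub_symb_mem_of_isUnit_add_of_isUnit_sub h2 huw.1 huw.2)
    (symb_sub_symb_mem_of_isUnit_add_of_isUnit_sub h2 hwv.1 hwv.2)

theorem three_smul_symb_one_mem [IsLocalRing R] (h2 : IsUnit (2 : R)) (h3 : IsUnit (3 : R)) :
    (3 : ℤ) • symb (1 : Rˣ) ∈ threeTermSubgroup R := by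
  have h112 := symb_add_symb_add_symb_mem (u := 1) (v := 1) (w := h2.unit)
    (by simp [one_add_one_eq_two])
  convert sub_mem h112 (symb_sub_symb_mem h2 h3 h2.unit 1) using 1
  abel

theorem mem_threeTermSubgroup_iff [IsLocalRing R] (h2 : IsUnit (2 : R)) (h3 : IsUnit (3 : R))
    (z : FreeAbelianGroup (Rˣ ⧸ Subgroup.zpowers (-1 : Rˣ))) :
    z ∈ threeTermSubgroup R ↔ (3 : ℤ) ∣ lift (fun _ => (1 : ℤ)) z := by
  refine ⟨fun hz => ?_, fun ⟨c, hc⟩ => ?_⟩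
  · obtain ⟨k, hk⟩ := threeTermSubgroup_le_comap_lift_one hz
    exact ⟨k, by rw [← hk]; exact mul_comm _ _⟩
  · have hdeg := sub_lift_one_smul_mem (H := threeTermSubgroup R) _
      (fun x => QuotientGroup.induction_on x fun u => symb_sub_symb_mem h2 h3 u 1) z
    rw [hc, mul_comm, mul_smul] at hdeg
    simpa only [sub_add_cancel] using add_mem hdeg (zsmul_mem (three_smul_symb_one_mem h2 h3) c)

end UnitsModSign

/-- For `p ≥ 5` prime and `n ≥ 1`, the subgroup of `ℤ[(ℤ/pⁿℤ)ˣ/±1]`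
generated by the elements `[x]+[y]+[x+y]` (for `x`, `y`, `x+y` all units) contains
`[u]−[v]` for all units `u, v`, contains `3·[1]`, and is exactly the set of elements of
degree divisible by `3`. -/
theorem stmt_9 (hp : p.Prime) (hp5 : 5 ≤ p) (hn : 1 ≤ n) :
    (∀ u v : (ZMod (p ^ n))ˣ,
        FreeAbelianGroup.of (cls p n u) - FreeAbelianGroup.of (cls p n v) ∈ A p n) ∧
    (3 : ℤ) • FreeAbelianGroup.of (cls p n 1) ∈ A p n ∧
    ∀ z : FreeAbelianGroup (Q p n), z ∈ A p n ↔ (3 : ℤ) ∣ deg p n z := by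
  have := ZMod.isLocalRing_prime_pow hp hn
  have h2 : IsUnit (2 : ZMod (p ^ n)) := by
    exact_mod_cast ZMod.isUnit_natCast_prime_pow_of_lt hp hn two_pos (by omega)
  have h3 : IsUnit (3 : ZMod (p ^ n)) := by
    exact_mod_cast ZMod.isUnit_natCast_prime_pow_of_lt hp hn three_pos (by omega)
  exact ⟨symb_sub_symb_mem h2 h3, three_smul_symb_one_mem h2 h3, mem_threeTermSubgroup_iff h2 h3⟩

end Stmt9
end

section
/- Let Γ = Γ₀(p) for a prime p, let d = gcd(p−1, 12) and n = (p−1)/d. The Eisenstein series E = dlog(u) attached to the modular unit u(z) = (Δ(pz)/Δ(z))^{1/d} has L-function L(E, s) = (24/d)·(1 − p^{1−s})·ζ(s−1)·ζ(s), and hence L(E, 1) = −(12/d)·log p. -/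
/-!
Removing the multiples of `p` from `n ↦ n` gives the coefficients `n·[p ∤ n]`, whose L-series is
`(1 - p^{1-s}) ζ(s-1)`: the multiples of `p` contribute `p · p^{-s} ζ(s-1)`. Since
`σ' = 1 ⍟ (n·[p ∤ n])`, multiplying by `ζ(s)` gives the first claim. At `s = 1` the simple zero of
`1 - p^{1-s}` (derivative `log p`) cancels the simple pole of `ζ(s)` (residue `1`), and the limit is
`(24/d) · log p · ζ(0) = -(12/d) log p`.
-/

open Filter Topology

namespace Stmt15

/-- `σ'(k) = Σ_{m | k, p ∤ m} m`. -/
def sigma' (p k : ℕ) : ℕ := ∑ m ∈ k.divisors.filter (fun m => ¬ p ∣ m), m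

/-- The `L`-function of the Eisenstein series `E = dlog(u)` on `Γ₀(p)`:
`L(E,s) = (24/d)·Σ_{k≥1} σ'(k) k^{−s}` where `d = gcd(p−1,12)`. -/
noncomputable def LE (p : ℕ) (s : ℂ) : ℂ :=
  ((24 : ℂ) / (Nat.gcd (p - 1) 12 : ℂ)) * ∑' k : ℕ, (sigma' p k : ℂ) * (k : ℂ) ^ (-s)

open Complex LSeries
open scoped LSeries.notation

def dilate (k : ℕ) (f : ℕ → ℂ) (n : ℕ) : ℂ := if k ∣ n then f (n / k) else 0

lemma term_dilate_mul {k : ℕ} (hk : k ≠ 0) (f : ℕ → ℂ) (s : ℂ) (m : ℕ) :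
    term (dilate k f) s (k * m) = (k : ℂ) ^ (-s) * term f s m := by
  rcases eq_or_ne m 0 with rfl | hm
  · simp
  rw [term_of_ne_zero (mul_ne_zero hk hm), term_of_ne_zero hm, dilate,
    if_pos (dvd_mul_right k m), Nat.mul_div_cancel_left m (Nat.pos_of_ne_zero hk),
    Nat.cast_mul, natCast_mul_natCast_cpow, cpow_neg]
  field_simp

lemma LSeriesHasSum_dilate {k : ℕ} (hk : k ≠ 0) {f : ℕ → ℂ} {s a : ℂ}
    (hf : LSeriesHasSum f s a) : LSeriesHasSum (dilate k f) s ((k : ℂ) ^ (-s) * a) := by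
  have hsupp : ∀ n ∉ Set.range (k * ·), term (dilate k f) s n = 0 := by
    intro n hn
    rcases eq_or_ne n 0 with rfl | hn0
    · rfl
    rw [term_of_ne_zero hn0, dilate, if_neg fun ⟨m, hm⟩ => hn ⟨m, hm.symm⟩, zero_div]
  have hterm : term (dilate k f) s ∘ (k * ·) = fun m => (k : ℂ) ^ (-s) * term f s m :=
    funext (term_dilate_mul hk f s)
  rw [LSeriesHasSum, ← (mul_right_injective₀ hk).hasSum_iff hsupp, hterm]
  exact hf.mul_left _

lemma term_natCast_mul (f : ℕ → ℂ) (s : ℂ) (n : ℕ) :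
    term (fun n => n * f n) s n = term f (s - 1) n := by
  rcases eq_or_ne n 0 with rfl | hn
  · simp
  have hn' : (n : ℂ) ≠ 0 := Nat.cast_ne_zero.mpr hn
  rw [term_of_ne_zero hn, term_of_ne_zero hn, cpow_sub _ _ hn', cpow_one]
  field_simp

lemma LSeriesHasSum_natCast_mul_iff {f : ℕ → ℂ} {s a : ℂ} :
    LSeriesHasSum (fun n => n * f n) s a ↔ LSeriesHasSum f (s - 1) a := by
  rw [LSeriesHasSum, LSeriesHasSum, funext (term_natCast_mul f s)]

def notDvd (k n : ℕ) : ℂ := if k ∣ n then 0 else 1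

lemma notDvd_eq_one_sub_dilate (k : ℕ) : notDvd k = 1 - dilate k 1 := by
  funext n
  by_cases h : k ∣ n <;> simp [notDvd, dilate, h]

lemma LSeriesHasSum_notDvd {k : ℕ} (hk : k ≠ 0) {s : ℂ} (hs : 1 < s.re) :
    LSeriesHasSum (notDvd k) s ((1 - (k : ℂ) ^ (-s)) * riemannZeta s) := by
  rw [notDvd_eq_one_sub_dilate, sub_mul, one_mul]
  exact (LSeriesHasSum_one hs).sub (LSeriesHasSum_dilate hk (LSeriesHasSum_one hs))

lemma sigma'_eq_convolution (p : ℕ) :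
    (fun n => (sigma' p n : ℂ)) = (1 : ℕ → ℂ) ⍟ fun n => n * notDvd p n := by
  funext n
  rcases eq_or_ne n 0 with rfl | hn
  · simp [sigma']
  simp only [convolution_def, Pi.one_apply, one_mul]
  rw [Nat.sum_divisorsAntidiagonal' (f := fun _ b => (b : ℂ) * notDvd p b), sigma', Nat.cast_sum,
    Finset.sum_filter]
  refine Finset.sum_congr rfl fun m _ => ?_
  by_cases h : p ∣ m <;> simp [notDvd, h]

lemma LSeriesHasSum_sigma' {p : ℕ} (hp : p ≠ 0) {s : ℂ} (hs : 2 < s.re) :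
    LSeriesHasSum (fun n => (sigma' p n : ℂ)) s
      ((1 - (p : ℂ) ^ (1 - s)) * riemannZeta (s - 1) * riemannZeta s) := by
  have hnotDvd := LSeriesHasSum_notDvd hp (s := s - 1) (by simp; linarith)
  rw [neg_sub, ← LSeriesHasSum_natCast_mul_iff] at hnotDvd
  rw [sigma'_eq_convolution, mul_comm]
  exact (LSeriesHasSum_one (by linarith)).convolution hnotDvd

lemma LE_eq {p : ℕ} (hp : p ≠ 0) {s : ℂ} (hs : 2 < s.re) :
    LE p s = 24 / (Nat.gcd (p - 1) 12 : ℂ) * (1 - (p : ℂ) ^ (1 - s)) *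
      riemannZeta (s - 1) * riemannZeta s := by
  have hLSeries : ∑' k : ℕ, (sigma' p k : ℂ) * (k : ℂ) ^ (-s) = LSeries (fun n => sigma' p n) s :=
    tsum_congr fun k => (term_def₀ (f := fun n => (sigma' p n : ℂ)) (by simp [sigma']) s k).symm
  rw [LE, hLSeries, (LSeriesHasSum_sigma' hp hs).LSeries_eq]
  ring

lemma tendsto_one_sub_cpow_one_sub_div_sub_one {a : ℂ} (ha : a ≠ 0) :
    Tendsto (fun s : ℂ => (1 - a ^ (1 - s)) / (s - 1)) (𝓝[≠] 1) (𝓝 (log a)) := by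
  have hderiv : HasDerivAt (fun s : ℂ => 1 - a ^ (1 - s)) (log a) 1 := by
    have := (((hasDerivAt_id (1 : ℂ)).const_sub 1).const_cpow (c := a) (Or.inl ha)).const_sub 1
    simpa using this
  refine hderiv.tendsto_slope.congr fun s => ?_
  simp [slope_def_field]

lemma tendsto_riemannZeta_sub_one :
    Tendsto (fun s : ℂ => riemannZeta (s - 1)) (𝓝[≠] 1) (𝓝 (-1 / 2)) := by
  have hcont : ContinuousAt (fun s : ℂ => riemannZeta (s - 1)) 1 :=
    (differentiableAt_riemannZeta (by norm_num)).continuousAt.comp_of_eq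
      (continuous_sub_right 1).continuousAt (sub_self 1)
  simpa [riemannZeta_zero] using hcont.tendsto.mono_left nhdsWithin_le_nhds

lemma tendsto_one_sub_cpow_mul_riemannZeta_sub_one_mul_riemannZeta {a : ℂ} (ha : a ≠ 0) :
    Tendsto (fun s : ℂ => (1 - a ^ (1 - s)) * riemannZeta (s - 1) * riemannZeta s) (𝓝[≠] 1)
      (𝓝 (-log a / 2)) := by
  have hlim := ((tendsto_one_sub_cpow_one_sub_div_sub_one ha).mul tendsto_riemannZeta_sub_one).mul
    riemannZeta_residue_one
  rw [show log a * (-1 / 2) * 1 = -log a / 2 by ring] at hlim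
  refine hlim.congr' ?_
  filter_upwards [self_mem_nhdsWithin] with s (hs : s ≠ 1)
  have : s - 1 ≠ 0 := sub_ne_zero.mpr hs
  field_simp

/-- Let `Γ = Γ₀(p)`, `d = gcd(p−1,12)`.  The Eisenstein series
`E = dlog(u)` of the modular unit `u = (Δ(pz)/Δ(z))^{1/d}` has
`L(E,s) = (24/d)·(1 − p^{1−s})·ζ(s−1)·ζ(s)` (on the half-plane of convergence
`Re s > 2`), and hence (taking the limit of the continuation as `s → 1`)
`L(E,1) = −(12/d)·log p`. -/
theorem stmt_15 (p : ℕ) (hp : p.Prime) :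
    (∀ s : ℂ, 2 < s.re →
      LE p s = ((24 : ℂ) / (Nat.gcd (p - 1) 12 : ℂ)) * (1 - (p : ℂ) ^ ((1 : ℂ) - s)) *
        riemannZeta (s - 1) * riemannZeta s) ∧
    Tendsto (fun s : ℂ =>
        ((24 : ℂ) / (Nat.gcd (p - 1) 12 : ℂ)) * (1 - (p : ℂ) ^ ((1 : ℂ) - s)) *
          riemannZeta (s - 1) * riemannZeta s)
      (𝓝[≠] (1 : ℂ))
      (𝓝 (-((12 : ℂ) / (Nat.gcd (p - 1) 12 : ℂ)) * Real.log p)) := by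
  refine ⟨fun s hs => LE_eq hp.ne_zero hs, ?_⟩
  have hlim := (tendsto_one_sub_cpow_mul_riemannZeta_sub_one_mul_riemannZeta
    (Nat.cast_ne_zero.mpr hp.ne_zero)).const_mul (24 / (Nat.gcd (p - 1) 12 : ℂ))
  convert hlim using 2 with s
  · ring
  · rw [natCast_log]
    ring

end Stmt15
end

section
/- Let 𝕋 be a commutative ring, I an ideal, T₀ ∈ 𝕋 with I·T₀ = 0, and V a 𝕋-module that is torsion-free as a ℤ_ℓ-module, such that T₀ − n ∈ I for an integer n ≠ 0. Then I·V ∩ T₀·V = 0, and hence the natural map V → V/I·V × V/T₀·V is injective. -/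
namespace Stmt17

/-- Let `𝕋` be a commutative ring, `I` an ideal, `T₀ ∈ 𝕋` with `I·T₀ = 0`,
and `V` a `𝕋`-module which is torsion-free as a `ℤ`(`= ℤ_ℓ`)-module, such that
`T₀ − n ∈ I` for an integer `n ≠ 0`.  Then `I·V ∩ T₀·V = 0`, and hence the natural map
`V → V/I·V × V/T₀·V` is injective. -/
theorem stmt_17 {𝕋 : Type*} [CommRing 𝕋] {V : Type*} [AddCommGroup V] [Module 𝕋 V]
    (I : Ideal 𝕋) (T₀ : 𝕋) (hIT₀ : ∀ t ∈ I, t * T₀ = 0)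
    (n : ℤ) (hn : n ≠ 0) (hT₀n : T₀ - (n : 𝕋) ∈ I)
    (htf : ∀ (m : ℤ), m ≠ 0 → ∀ v : V, m • v = 0 → v = 0) :
    (I • (⊤ : Submodule 𝕋 V)) ⊓
        LinearMap.range (T₀ • (LinearMap.id : V →ₗ[𝕋] V)) = ⊥ ∧
      Function.Injective (fun v : V =>
        ((Submodule.Quotient.mk v : V ⧸ (I • (⊤ : Submodule 𝕋 V))),
         (Submodule.Quotient.mk v :
            V ⧸ LinearMap.range (T₀ • (LinearMap.id : V →ₗ[𝕋] V))))) := by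
  have key : ∀ x : V, x ∈ I • (⊤ : Submodule 𝕋 V) →
      x ∈ LinearMap.range (T₀ • (LinearMap.id : V →ₗ[𝕋] V)) → x = 0 := by
    intro x hx hx'
    obtain ⟨w, hw⟩ := hx'
    have hw' : T₀ • w = x := by simpa using hw
    have h1 : T₀ • x = 0 := by
      refine Submodule.smul_induction_on hx ?_ ?_
      · intro t ht v _
        rw [smul_smul, mul_comm, hIT₀ t ht, zero_smul]
      · intro a b ha hb
        rw [smul_add, ha, hb, add_zero]
    have h2 : (T₀ - (n : 𝕋)) • x = 0 := by
      rw [← hw', smul_smul, hIT₀ _ hT₀n, zero_smul]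
    have h3 : ((n : ℤ) : 𝕋) • x = 0 := by
      have : (T₀ - (T₀ - (n : 𝕋))) • x = 0 := by
        rw [sub_smul, h1, h2, sub_zero]
      simpa using this
    have h4 : n • x = 0 := by rw [← Int.cast_smul_eq_zsmul 𝕋]; exact h3
    exact htf n hn x h4
  have hbot : (I • (⊤ : Submodule 𝕋 V)) ⊓
      LinearMap.range (T₀ • (LinearMap.id : V →ₗ[𝕋] V)) = ⊥ := by
    rw [eq_bot_iff]
    rintro x ⟨hx1, hx2⟩
    exact key x hx1 hx2
  refine ⟨hbot, ?_⟩
  intro a b hab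
  have h1 : (Submodule.Quotient.mk a : V ⧸ (I • (⊤ : Submodule 𝕋 V))) =
      Submodule.Quotient.mk b := congrArg Prod.fst hab
  have h2 : (Submodule.Quotient.mk a :
      V ⧸ LinearMap.range (T₀ • (LinearMap.id : V →ₗ[𝕋] V))) =
      Submodule.Quotient.mk b := congrArg Prod.snd hab
  have m1 := (Submodule.Quotient.eq _).mp h1
  have m2 := (Submodule.Quotient.eq _).mp h2
  have := key (a - b) m1 m2
  exact sub_eq_zero.mp this

end Stmt17
end

section
/- Let V_𝔪 be a free rank-2 module over a ℤ_ℓ-algebra 𝕋_𝔪 which is a local complete Noetherian ring with Hom_{ℤ_ℓ}(𝕋_𝔪, ℤ_ℓ) free of rank 1 over 𝕋_𝔪 (Gorenstein). Given a group G acting 𝕋_𝔪-linearly on V_𝔪 with determinant character χ, the twisted dual V_𝔪* = Hom_{ℤ_ℓ}(V_𝔪, ℤ_ℓ) with G-action (g·φ)(x) = χ(g)·φ(g⁻¹x) is isomorphic to V_𝔪 as a 𝕋_𝔪[G]-module. -/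
/-!
Fix a basis `(e₁, e₂)` of `V` over `𝕋`. The determinant pairing `⟨v, x⟩ = det(v, x)` identifies
`V` with its `𝕋`-linear dual, and `det(g v, g x) = χ(g) det(v, x)`, so `v ↦ det(v, –)` twists
the `G`-action by `χ`. Composing with the Gorenstein generator `λ` then identifies the `𝕋`-linear
dual with the `ℤ_ℓ`-linear dual, since `λ(t · –)` runs exactly once through every
`ℤ_ℓ`-functional on `𝕋`.
-/

section GorensteinDual

variable {R A : Type*} (M : Type*) [CommRing R] [CommRing A] [Algebra R A]
  [AddCommGroup M] [Module A M] [Module R M] [IsScalarTower R A M]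
  (lam : A →ₗ[R] R) (hlam : ∀ φ : A →ₗ[R] R, ∃! t : A, ∀ x : A, φ x = lam (t * x))

include hlam in
theorem eq_zero_of_forall_lam_mul_eq_zero {s : A} (hs : ∀ x, lam (s * x) = 0) : s = 0 := by
  obtain ⟨t, -, huniq⟩ := hlam 0
  exact (huniq s fun x => (hs x).symm).trans (huniq 0 fun x => by simp).symm

include hlam in
theorem lam_comp_injective :
    Function.Injective fun f : M →ₗ[A] A => lam ∘ₗ f.restrictScalars R := by
  intro f f' hff'
  ext m
  rw [← sub_eq_zero]
  refine eq_zero_of_forall_lam_mul_eq_zero lam hlam fun t => ?_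
  have h := LinearMap.congr_fun hff' (t • m)
  simp only [LinearMap.comp_apply, LinearMap.restrictScalars_apply, map_smul, smul_eq_mul] at h
  rw [sub_mul, mul_comm, mul_comm (f' m), map_sub, h, sub_self]

include hlam in
theorem lam_comp_surjective :
    Function.Surjective fun f : M →ₗ[A] A => lam ∘ₗ f.restrictScalars R := by
  intro φ
  choose f hf huniq using
    fun m => hlam (φ ∘ₗ (LinearMap.toSpanSingleton A M m).restrictScalars R)
  simp only [LinearMap.comp_apply, LinearMap.restrictScalars_apply,
    LinearMap.toSpanSingleton_apply] at hf huniq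
  refine ⟨{ toFun := f, map_add' := fun m m' => ?_, map_smul' := fun s m => ?_ }, ?_⟩
  · refine (huniq _ _ fun x => ?_).symm
    rw [smul_add, map_add, hf, hf, add_mul, map_add]
  · refine (huniq _ _ fun x => ?_).symm
    rw [smul_smul, hf, RingHom.id_apply, smul_eq_mul, mul_comm s, mul_assoc, mul_comm x]
  · ext m
    simpa using (hf m 1).symm

noncomputable def gorensteinDualEquiv : (M →ₗ[A] A) ≃+ (M →ₗ[R] R) :=
  AddEquiv.ofBijective
    (AddMonoidHom.mk' (fun f : M →ₗ[A] A => lam ∘ₗ f.restrictScalars R) fun f f' => by ext; simp)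
    ⟨lam_comp_injective M lam hlam, lam_comp_surjective M lam hlam⟩

@[simp]
theorem gorensteinDualEquiv_apply (f : M →ₗ[A] A) (m : M) :
    gorensteinDualEquiv M lam hlam f m = lam (f m) :=
  rfl

end GorensteinDual

namespace Module.Basis

variable {A V : Type*} [CommRing A] [AddCommGroup V] [Module A V] (b : Basis (Fin 2) A V)

noncomputable def detPairing : V →ₗ[A] V →ₗ[A] A :=
  (LinearMap.mul A A).compl₁₂ (b.coord 0) (b.coord 1) -
    (LinearMap.mul A A).compl₁₂ (b.coord 1) (b.coord 0)

theorem detPairing_apply (v x : V) :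
    b.detPairing v x = b.repr v 0 * b.repr x 1 - b.repr v 1 * b.repr x 0 :=
  rfl

theorem detPairing_apply_eq_det (v x : V) : b.detPairing v x = b.det ![v, x] := by
  simp only [detPairing_apply, det_apply, Matrix.det_fin_two, toMatrix_apply,
    Matrix.cons_val_zero, Matrix.cons_val_one]
  ring

theorem detPairing_map (f : V →ₗ[A] V) (v x : V) :
    b.detPairing (f v) (f x) = LinearMap.det f * b.detPairing v x := by
  rw [detPairing_apply_eq_det, detPairing_apply_eq_det, ← det_comp]
  congr 1
  ext i
  fin_cases i <;> rfl

theorem detPairing_bijective : Function.Bijective b.detPairing := by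
  refine ⟨(injective_iff_map_eq_zero _).mpr fun v hv => ?_, fun f => ?_⟩
  · refine b.ext_elem fun i => ?_
    fin_cases i
    · simpa [detPairing_apply] using LinearMap.congr_fun hv (b 1)
    · simpa [detPairing_apply] using LinearMap.congr_fun hv (b 0)
  · refine ⟨f (b 1) • b 0 - f (b 0) • b 1, b.ext fun i => ?_⟩
    fin_cases i <;> simp [detPairing_apply]

noncomputable def detPairingEquiv : V ≃ₗ[A] Dual A V :=
  LinearEquiv.ofBijective b.detPairing b.detPairing_bijective

end Module.Basis

namespace Stmt18

theorem stmt_18_general (ℓ : ℕ) [Fact ℓ.Prime]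
    (𝕋 : Type*) [CommRing 𝕋] [Algebra ℤ_[ℓ] 𝕋]
    (V : Type*) [AddCommGroup V] [Module 𝕋 V] [Module ℤ_[ℓ] V] [IsScalarTower ℤ_[ℓ] 𝕋 V]
    [Module.Free 𝕋 V] (hrank : Module.finrank 𝕋 V = 2)
    (hGorenstein : ∃ lam : 𝕋 →ₗ[ℤ_[ℓ]] ℤ_[ℓ],
      ∀ φ : 𝕋 →ₗ[ℤ_[ℓ]] ℤ_[ℓ], ∃! t : 𝕋, ∀ x : 𝕋, φ x = lam (t * x))
    (G : Type*) [Group G] (ρ : Representation 𝕋 G V) (χ : G →* ℤ_[ℓ]ˣ)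
    (hdet : ∀ g : G, LinearMap.det (ρ g) = algebraMap ℤ_[ℓ] 𝕋 (χ g)) :
    ∃ F : V ≃+ (V →ₗ[ℤ_[ℓ]] ℤ_[ℓ]),
      (∀ (t : 𝕋) (v x : V), F (t • v) x = F v (t • x)) ∧
      (∀ (g : G) (v x : V), F (ρ g v) x = (χ g : ℤ_[ℓ]) * F v (ρ g⁻¹ x)) := by
  obtain ⟨lam, hlam⟩ := hGorenstein
  have : Nontrivial 𝕋 := not_subsingleton_iff_nontrivial.mp fun _ => by
    have := Module.subsingleton 𝕋 V
    simp at hrank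
  have : Module.Finite 𝕋 V := Module.finite_of_finrank_eq_succ hrank
  let b := Module.finBasisOfFinrankEq 𝕋 V hrank
  refine ⟨b.detPairingEquiv.toAddEquiv.trans (gorensteinDualEquiv V lam hlam),
    fun t v x => ?_, fun g v x => ?_⟩
  · simp
  · change lam (b.detPairing _ _) = _ * lam (b.detPairing _ _)
    conv_lhs => rw [← ρ.self_inv_apply g x, b.detPairing_map, hdet, ← Algebra.smul_def, map_smul,
      smul_eq_mul]

/-- Let `𝕋` be a `ℤ_ℓ`-algebra which is a local complete Noetherian ring
with `Hom_{ℤ_ℓ}(𝕋, ℤ_ℓ)` free of rank `1` over `𝕋` (Gorenstein; phrased here as the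
existence of a generator `λ`, every `ℤ_ℓ`-functional on `𝕋` being uniquely `λ(t·–)`),
and let `V_𝔪` be a free rank-2 `𝕋`-module with a `𝕋`-linear action `ρ` of a group `G`
of determinant character `χ` (valued in `ℤ_ℓˣ`).  Then the twisted dual
`V_𝔪* = Hom_{ℤ_ℓ}(V_𝔪, ℤ_ℓ)`, with `G`-action `(g·φ)(x) = χ(g)·φ(g⁻¹x)` and `𝕋`-action
`(t·φ)(x) = φ(t·x)`, is isomorphic to `V_𝔪` as a `𝕋[G]`-module. -/
theorem stmt_18 (ℓ : ℕ) [Fact ℓ.Prime]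
    (𝕋 : Type*) [CommRing 𝕋] [Algebra ℤ_[ℓ] 𝕋]
    [IsLocalRing 𝕋] [IsNoetherianRing 𝕋]
    (hcomplete : IsAdicComplete (IsLocalRing.maximalIdeal 𝕋) 𝕋)
    (V : Type*) [AddCommGroup V] [Module 𝕋 V] [Module ℤ_[ℓ] V] [IsScalarTower ℤ_[ℓ] 𝕋 V]
    [Module.Free 𝕋 V] (hrank : Module.finrank 𝕋 V = 2)
    (hGorenstein : ∃ lam : 𝕋 →ₗ[ℤ_[ℓ]] ℤ_[ℓ],
      ∀ φ : 𝕋 →ₗ[ℤ_[ℓ]] ℤ_[ℓ], ∃! t : 𝕋, ∀ x : 𝕋, φ x = lam (t * x))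
    (G : Type*) [Group G] (ρ : Representation 𝕋 G V) (χ : G →* ℤ_[ℓ]ˣ)
    (hdet : ∀ g : G, LinearMap.det (ρ g) = algebraMap ℤ_[ℓ] 𝕋 (χ g)) :
    ∃ F : V ≃+ (V →ₗ[ℤ_[ℓ]] ℤ_[ℓ]),
      (∀ (t : 𝕋) (v x : V), F (t • v) x = F v (t • x)) ∧
      (∀ (g : G) (v x : V), F (ρ g v) x = (χ g : ℤ_[ℓ]) * F v (ρ g⁻¹ x)) :=
  stmt_18_general ℓ 𝕋 V hrank hGorenstein G ρ χ hdet

end Stmt18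
end
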